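/- arXiv:1809.02574 — 12 statements merged into one kernel-verified Lean document; each statement's English description precedes it below -/
import Mathlib

section
/- Let G be a group and D(G) the inductive family defined by: S ∈ D(G) if S ∩ S⁻¹ ≠ ∅, and if T ∪ {a} ∈ D(G) and T ∪ {b} ∈ D(G) then T ∪ {a*b} ∈ D(G). If S ∈ D(G), then there exists a finite subset S' ⊆ S with S' ∈ D(G). -/
/-- The inductive family `D(G)` of subsets of a group `G`: a set is in `D(G)` if it meets
its own set of inverses, and the family is closed under the rule
`T ∪ {a}, T ∪ {b} ∈ D(G) ⟹ T ∪ {a*b} ∈ D(G)`. -/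
inductive RightD {G : Type*} [Group G] : Set G → Prop
  | base (S : Set G) (a : G) (ha : a ∈ S) (hinv : a⁻¹ ∈ S) : RightD S
  | step (T : Set G) (a b : G) (h1 : RightD (T ∪ {a})) (h2 : RightD (T ∪ {b})) :
      RightD (T ∪ {a * b})

/-
Induction on the derivation of `S ∈ D(G)`. A base case is witnessed by `{a, a⁻¹}`. In a step
case, finite witnesses `S₁ ⊆ T ∪ {a}` and `S₂ ⊆ T ∪ {b}` only use the finitely many elements
`T' = (S₁ ∪ S₂) ∩ T` of `T`, so by monotonicity of `D(G)` the rule applies to `T'` and gives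
the finite witness `T' ∪ {a * b}`.
-/

namespace RightD

variable {G : Type*} [Group G]

theorem mono {S U : Set G} (hS : RightD S) (hSU : S ⊆ U) : RightD U := by
  induction hS generalizing U with
  | base S a ha hinv => exact base U a (hSU ha) (hSU hinv)
  | step T a b _ _ ih₁ ih₂ =>
    have hTU : T ⊆ U := (Set.union_subset_iff.1 hSU).1
    have hab : a * b ∈ U := hSU (Or.inr rfl)
    have := step U a b (ih₁ (Set.union_subset_union_left _ hTU))
      (ih₂ (Set.union_subset_union_left _ hTU))
    rwa [Set.union_singleton, Set.insert_eq_of_mem hab] at this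

theorem pair (a : G) : RightD ({a, a⁻¹} : Set G) :=
  base _ a (Set.mem_insert _ _) (Set.mem_insert_of_mem _ rfl)

theorem step_of_subset {T S₁ S₂ : Set G} {a b : G} (h₁ : RightD S₁) (h₂ : RightD S₂)
    (hS₁ : S₁ ⊆ T ∪ {a}) (hS₂ : S₂ ⊆ T ∪ {b}) : RightD ((S₁ ∪ S₂) ∩ T ∪ {a * b}) := by
  refine step _ a b (h₁.mono ?_) (h₂.mono ?_) <;> rw [Set.inter_union_distrib_right]
  · exact Set.subset_inter (Set.subset_union_left.trans
      (Set.union_subset_union_left _ Set.subset_union_left)) hS₁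
  · exact Set.subset_inter (Set.subset_union_left.trans
      (Set.union_subset_union_left _ Set.subset_union_right)) hS₂

end RightD

theorem stmt4 {G : Type*} [Group G] {S : Set G} (hS : RightD S) :
    ∃ S' : Set G, S' ⊆ S ∧ S'.Finite ∧ RightD S' := by
  induction hS with
  | base S a ha hinv =>
    exact ⟨{a, a⁻¹}, Set.insert_subset ha (Set.singleton_subset_iff.2 hinv),
      Set.toFinite _, RightD.pair a⟩
  | step T a b _ _ ih₁ ih₂ =>
    obtain ⟨S₁, hS₁T, hS₁fin, hS₁⟩ := ih₁
    obtain ⟨S₂, hS₂T, hS₂fin, hS₂⟩ := ih₂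
    exact ⟨(S₁ ∪ S₂) ∩ T ∪ {a * b},
      Set.union_subset_union_left _ Set.inter_subset_right,
      ((hS₁fin.union hS₂fin).inter_of_left T).union (Set.finite_singleton _),
      RightD.step_of_subset hS₁ hS₂ hS₁T hS₂T⟩
end

section
/- Let G be a group and D(G) the inductive family defined by: S ∈ D(G) if S ∩ S⁻¹ ≠ ∅, and if T ∪ {a} ∈ D(G) and T ∪ {b} ∈ D(G) then T ∪ {a*b} ∈ D(G). If S ∪ {a*b} ∈ D(G), then S ∪ {a, b} ∈ D(G). -/
namespace RightD

variable {G : Type*} [Group G]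

theorem mono_s5 {V W : Set G} (h : RightD V) (hVW : V ⊆ W) : RightD W := by
  induction h generalizing W with
  | base S x hx hxinv => exact base W x (hVW hx) (hVW hxinv)
  | step T c d _ _ ih₁ ih₂ =>
    have hW : (W ∪ T) ∪ {c * d} = W :=
      Set.Subset.antisymm
        (Set.union_subset (Set.union_subset subset_rfl (Set.subset_union_left.trans hVW))
          (Set.subset_union_right.trans hVW))
        (Set.subset_union_left.trans Set.subset_union_left)
    have hsub : ∀ x : G, T ∪ {x} ⊆ (W ∪ T) ∪ {x} :=
      fun _ => Set.union_subset_union_left _ Set.subset_union_right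
    rw [← hW]
    exact step (W ∪ T) c d (ih₁ (hsub c)) (ih₂ (hsub d))

theorem inv_mul_of_mem {T : Set G} {a c : G} (ha : a ∈ T) (h : RightD (T ∪ {c})) :
    RightD (T ∪ {a⁻¹ * c}) :=
  step T a⁻¹ c (base _ a (Or.inl ha) (Or.inr rfl)) h

end RightD

theorem stmt5 {G : Type*} [Group G] {S : Set G} {a b : G}
    (h : RightD (S ∪ {a * b})) : RightD (S ∪ {a, b}) := by
  have hab : RightD ((S ∪ {a}) ∪ {a * b}) :=
    h.mono_s5 (Set.union_subset_union_left _ Set.subset_union_left)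
  have hb := RightD.inv_mul_of_mem (Set.mem_union_right S (Set.mem_singleton a)) hab
  rwa [inv_mul_cancel_left, Set.union_assoc, Set.singleton_union] at hb
end

section
/- Let G be a group, S ⊆ G, and ⟨S⟩ the subsemigroup of G generated by S. With D(G) the inductive family defined by: S ∈ D(G) if S ∩ S⁻¹ ≠ ∅, and T ∪ {a}, T ∪ {b} ∈ D(G) implies T ∪ {a*b} ∈ D(G), we have: S ∈ D(G) if and only if ⟨S⟩ ∈ D(G). -/
open Subsemigroup

theorem Subsemigroup.exists_eq_or_eq_mul_of_mem_closure {M : Type*} [Semigroup M] {S : Set M}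
    {c : M} (hc : c ∈ closure S) : ∃ s ∈ S, c = s ∨ ∃ w ∈ closure S, c = s * w := by
  induction hc using closure_induction with
  | mem s hs => exact ⟨s, hs, Or.inl rfl⟩
  | mul x y _ hy ihx _ =>
    obtain ⟨s, hs, hx | ⟨w, hw, hx⟩⟩ := ihx
    · exact ⟨s, hs, Or.inr ⟨y, hy, by rw [hx]⟩⟩
    · exact ⟨s, hs, Or.inr ⟨w * y, mul_mem hw hy, by rw [hx, mul_assoc]⟩⟩

namespace RightD

variable {G : Type*} [Group G]

theorem union_inv_of_mem_closure {S : Set G} {c : G} (hc : c ∈ closure S) :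
    RightD (S ∪ {c⁻¹}) := by
  induction hc using closure_induction with
  | mem s hs => exact base _ s⁻¹ (Or.inr rfl) (Or.inl (by simpa using hs))
  | mul x y _ _ ihx ihy => simpa only [mul_inv_rev] using step S y⁻¹ x⁻¹ ihy ihx

theorem of_one_mem_closure {S : Set G} (h : (1 : G) ∈ closure S) : RightD S := by
  obtain ⟨s, hs, rfl | ⟨w, hw, hsw⟩⟩ := exists_eq_or_eq_mul_of_mem_closure h
  · exact base S 1 hs (by simpa using hs)
  · have hw' : w⁻¹ = s := inv_eq_of_mul_eq_one_left hsw.symm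
    simpa only [hw', Set.union_singleton, Set.insert_eq_of_mem hs]
      using union_inv_of_mem_closure hw

theorem of_subset_closure {U V : Set G} (hU : RightD U) (hUV : U ⊆ closure V) : RightD V := by
  induction hU generalizing V with
  | base U x hx hxinv =>
    exact of_one_mem_closure (by simpa using mul_mem (hUV hx) (hUV hxinv))
  | step T a b _ _ iha ihb =>
    have hT (x : G) : T ⊆ closure (V ∪ {x}) :=
      (Set.subset_union_left.trans hUV).trans (closure_mono Set.subset_union_left)
    obtain ⟨s, hs, hab⟩ := exists_eq_or_eq_mul_of_mem_closure (hUV (Or.inr rfl))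
    have hb : b ∈ closure (V ∪ {a⁻¹ * s}) := by
      have has : a⁻¹ * s ∈ closure (V ∪ {a⁻¹ * s}) := subset_closure (Or.inr rfl)
      rw [← inv_mul_cancel_left a b]
      rcases hab with hab | ⟨w, hw, hab⟩
      · rwa [hab]
      · rw [hab, ← mul_assoc]
        exact mul_mem has (closure_mono Set.subset_union_left hw)
    have hVa := iha (Set.union_subset (hT a)
      (Set.singleton_subset_iff.2 (subset_closure (Or.inr rfl))))
    have hVb := ihb (Set.union_subset (hT _) (Set.singleton_subset_iff.2 hb))
    simpa only [mul_inv_cancel_left, Set.union_singleton, Set.insert_eq_of_mem hs]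
      using step V a (a⁻¹ * s) hVa hVb

end RightD

theorem stmt6 {G : Type*} [Group G] (S : Set G) :
    RightD S ↔ RightD (Subsemigroup.closure S : Set G) :=
  ⟨fun h => h.of_subset_closure (subset_closure.trans (subset_closure (s := (closure S : Set G)))),
    fun h => h.of_subset_closure subset_rfl⟩
end

section
/- For the additive group ℤ of integers, a subset S ⊆ ℤ belongs to D(ℤ) if and only if S contains some element m ≤ 0 and some element n ≥ 0, where D(ℤ) is the smallest family of subsets of ℤ containing all S with S ∩ (−S) ≠ ∅ and closed under the rule: T ∪ {a}, T ∪ {b} ∈ D(ℤ) ⟹ T ∪ {a + b} ∈ D(ℤ). -/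
/-- The inductive family `D(ℤ)` of subsets of the additive group of integers. -/
inductive DInt : Set ℤ → Prop
  | base (S : Set ℤ) (a : ℤ) (ha : a ∈ S) (hneg : -a ∈ S) : DInt S
  | step (T : Set ℤ) (a b : ℤ) (h1 : DInt (T ∪ {a})) (h2 : DInt (T ∪ {b})) :
      DInt (T ∪ {a + b})

/-!
Since `{x | x ≤ 0}` and `{x | 0 ≤ x}` are closed under addition, the step rule preserves the
property of containing both a nonpositive and a nonnegative element, and every set meeting
its own negation has it. Conversely, if `T` contains `n ≥ 0` and `-k ≤ 0`, write `n` as a sum of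
ones and `-k` as a sum of minus ones: since `{-1, 1}` meets its negation, repeated steps
give `T ∪ {-1} ∪ {j} ∈ D(ℤ)` for all `j ≥ 0`, and then `T ∪ {n} ∪ {-k} ∈ D(ℤ)` for all `k ≥ 0`.
-/

theorem exists_mem_union_singleton_add {α : Type*} [Add α] {P : α → Prop}
    (hP : ∀ x y, P x → P y → P (x + y)) {T : Set α} {a b : α}
    (ha : ∃ x ∈ T ∪ {a}, P x) (hb : ∃ x ∈ T ∪ {b}, P x) : ∃ x ∈ T ∪ {a + b}, P x := by
  obtain ⟨x, hx | rfl, hPx⟩ := ha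
  · exact ⟨x, Or.inl hx, hPx⟩
  obtain ⟨y, hy | rfl, hPy⟩ := hb
  · exact ⟨y, Or.inl hy, hPy⟩
  · exact ⟨x + y, Or.inr rfl, hP x y hPx hPy⟩

theorem DInt.exists_nonpos_and_exists_nonneg {S : Set ℤ} (h : DInt S) :
    (∃ m ∈ S, m ≤ 0) ∧ (∃ n ∈ S, 0 ≤ n) := by
  induction h with
  | base S a ha hneg =>
    rcases le_total a 0 with h | h
    · exact ⟨⟨a, ha, h⟩, ⟨-a, hneg, by omega⟩⟩
    · exact ⟨⟨-a, hneg, by omega⟩, ⟨a, ha, h⟩⟩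
  | step T a b _ _ ih₁ ih₂ =>
    exact ⟨exists_mem_union_singleton_add (fun _ _ ↦ add_nonpos) ih₁.1 ih₂.1,
      exists_mem_union_singleton_add (fun _ _ ↦ add_nonneg) ih₁.2 ih₂.2⟩

theorem DInt.union_neg_one_natCast (T : Set ℤ) (j : ℕ) : DInt (T ∪ {-1} ∪ {(j : ℤ)}) := by
  induction j with
  | zero => exact .base _ 0 (Or.inr rfl) (Or.inr rfl)
  | succ j ih =>
    push_cast
    exact .step _ _ _ ih (.base _ 1 (Or.inr rfl) (Or.inl (Or.inr rfl)))

theorem DInt.union_natCast_neg_natCast (T : Set ℤ) (n k : ℕ) :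
    DInt (T ∪ {(n : ℤ)} ∪ {-(k : ℤ)}) := by
  induction k with
  | zero => exact .base _ 0 (Or.inr (by simp)) (Or.inr (by simp))
  | succ k ih =>
    rw [Nat.cast_succ, neg_add]
    exact .step _ _ _ ih (Set.union_right_comm T _ _ ▸ union_neg_one_natCast T n)

theorem DInt.of_nonpos_mem_of_nonneg_mem {S : Set ℤ} {m n : ℤ} (hm : m ∈ S) (hm0 : m ≤ 0)
    (hn : n ∈ S) (hn0 : 0 ≤ n) : DInt S := by
  lift n to ℕ using hn0
  obtain ⟨k, rfl⟩ : ∃ k : ℕ, m = -(k : ℤ) := ⟨(-m).toNat, by omega⟩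
  have hS : S ∪ {(n : ℤ)} ∪ {-(k : ℤ)} = S := by
    rw [Set.union_singleton, Set.union_singleton, Set.insert_eq_of_mem hn,
      Set.insert_eq_of_mem hm]
  exact hS ▸ union_natCast_neg_natCast S n k

theorem stmt7 (S : Set ℤ) :
    DInt S ↔ (∃ m ∈ S, m ≤ 0) ∧ (∃ n ∈ S, 0 ≤ n) :=
  ⟨DInt.exists_nonpos_and_exists_nonneg,
    fun ⟨⟨_, hm, hm0⟩, ⟨_, hn, hn0⟩⟩ ↦ .of_nonpos_mem_of_nonneg_mem hm hm0 hn hn0⟩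
end

section
/- Let G be a group. If S ∈ D(G) (the inductive family: S ∈ D(G) if S ∩ S⁻¹ ≠ ∅, closed under T ∪ {a}, T ∪ {b} ∈ D(G) ⟹ T ∪ {a*b} ∈ D(G)), then S does not extend to a right order of G; that is, there is no total order ≤ on G compatible with right multiplication such that every element of S is strictly positive. -/
theorem stmt9 {G : Type*} [Group G] {S : Set G} (hS : RightD S) :
    ¬ ∃ P : Set G, (∀ a ∈ P, ∀ b ∈ P, a * b ∈ P) ∧ (1 : G) ∉ P ∧
      (∀ a : G, a ≠ 1 → a ∈ P ∨ a⁻¹ ∈ P) ∧ S ⊆ P := by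
  rintro ⟨P, hmul, h1, htot, hsub⟩
  induction hS with
  | base S a ha hinv =>
      exact h1 (by simpa using hmul a (hsub ha) a⁻¹ (hsub hinv))
  | step T a b hA hB ihA ihB =>
      by_cases haP : a ∈ P
      · exact ihA (Set.union_subset (fun x hx => hsub (Or.inl hx))
          (fun x hx => by rw [Set.mem_singleton_iff] at hx; exact hx ▸ haP))
      · have hb : b ∈ P := by
          by_cases h1a : a = 1
          · have := hsub (Set.mem_union_right T rfl)
            rwa [h1a, one_mul] at this
          · rcases htot a h1a with h | h
            · exact absurd h haP
            · have hab : a * b ∈ P := hsub (Set.mem_union_right T rfl)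
              have := hmul _ h _ hab
              rwa [inv_mul_cancel_left] at this
        exact ihB (Set.union_subset (fun x hx => hsub (Or.inl hx))
          (fun x hx => by rw [Set.mem_singleton_iff] at hx; exact hx ▸ hb))
end

section
/- Let G be a group and S ⊆ G with S ∉ D(G), where D(G) is the inductive family: S ∈ D(G) if S ∩ S⁻¹ ≠ ∅, closed under T ∪ {a}, T ∪ {b} ∈ D(G) ⟹ T ∪ {a*b} ∈ D(G). Then there exists a subsemigroup T of G with S ⊆ T, T ∉ D(G), and such that G \ T is also a subsemigroup of G. -/
namespace RightD

variable {G : Type*} [Group G]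

theorem of_mul_mem {T : Set G} {a b : G} (hab : a * b ∈ T) (ha : RightD (T ∪ {a}))
    (hb : RightD (T ∪ {b})) : RightD T := by
  simpa [Set.union_eq_self_of_subset_right, hab] using RightD.step T a b ha hb

theorem mono_s10 {S S' : Set G} (h : RightD S) (hSS' : S ⊆ S') : RightD S' := by
  induction h generalizing S' with
  | base S a ha hinv => exact RightD.base S' a (hSS' ha) (hSS' hinv)
  | step T a b _ _ ih₁ ih₂ =>
    have hT : T ⊆ S' := Set.subset_union_left.trans hSS'
    exact of_mul_mem (hSS' (Set.mem_union_right _ rfl))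
      (ih₁ (Set.union_subset_union_left _ hT)) (ih₂ (Set.union_subset_union_left _ hT))

theorem exists_finite_subset {S : Set G} (h : RightD S) :
    ∃ F ⊆ S, F.Finite ∧ RightD F := by
  induction h with
  | base S a ha hinv =>
    exact ⟨{a, a⁻¹}, Set.insert_subset ha (Set.singleton_subset_iff.mpr hinv),
      (Set.finite_singleton _).insert _, RightD.base _ a (by simp) (by simp)⟩
  | step T a b _ _ ih₁ ih₂ =>
    obtain ⟨F₁, hF₁T, hF₁fin, hF₁⟩ := ih₁
    obtain ⟨F₂, hF₂T, hF₂fin, hF₂⟩ := ih₂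
    set F₀ : Set G := (F₁ \ {a}) ∪ (F₂ \ {b})
    have hF₀T : F₀ ⊆ T := Set.union_subset
      (Set.sdiff_subset_iff.mpr (Set.union_comm T {a} ▸ hF₁T))
      (Set.sdiff_subset_iff.mpr (Set.union_comm T {b} ▸ hF₂T))
    have h₁ : RightD (F₀ ∪ {a}) := hF₁.mono_s10 <|
      (Set.subset_sdiff_union F₁ {a}).trans (Set.union_subset_union_left _ Set.subset_union_left)
    have h₂ : RightD (F₀ ∪ {b}) := hF₂.mono_s10 <|
      (Set.subset_sdiff_union F₂ {b}).trans (Set.union_subset_union_left _ Set.subset_union_right)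
    exact ⟨F₀ ∪ {a * b}, Set.union_subset_union_left _ hF₀T,
      ((hF₁fin.sdiff).union hF₂fin.sdiff).union (Set.finite_singleton _), RightD.step F₀ a b h₁ h₂⟩

theorem not_sUnion_of_isChain {c : Set (Set G)} (hc : ∀ U ∈ c, ¬ RightD U)
    (hchain : IsChain (· ⊆ ·) c) (hne : c.Nonempty) : ¬ RightD (⋃₀ c) := by
  intro h
  obtain ⟨F, hFc, hFfin, hF⟩ := h.exists_finite_subset
  obtain ⟨U, hUc, hFU⟩ := hchain.directedOn.exists_mem_subset_of_finset_subset_biUnion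
    (f := id) hne (s := hFfin.toFinset) (by simpa [Set.sUnion_eq_biUnion] using hFc)
  exact hc U hUc (hF.mono_s10 (by simpa using hFU))

theorem exists_maximal_not {S : Set G} (hS : ¬ RightD S) :
    ∃ T, S ⊆ T ∧ Maximal (fun U => ¬ RightD U) T :=
  zorn_subset_nonempty {U | ¬ RightD U}
    (fun c hc hchain hne => ⟨⋃₀ c, not_sUnion_of_isChain hc hchain hne,
      fun _ => Set.subset_sUnion_of_mem⟩) S hS

section Maximal

variable {T : Set G} (hT : Maximal (fun U => ¬ RightD U) T)
include hT

theorem union_singleton_of_maximal {x : G} (hx : x ∉ T) : RightD (T ∪ {x}) := by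
  by_contra h
  exact hx (hT.eq_of_subset h Set.subset_union_left ▸ Set.mem_union_right T rfl)

theorem mul_mem_compl_of_maximal {a b : G} (ha : a ∈ Tᶜ) (hb : b ∈ Tᶜ) : a * b ∈ Tᶜ :=
  fun hab => hT.prop <| of_mul_mem hab (union_singleton_of_maximal hT ha)
    (union_singleton_of_maximal hT hb)

theorem mul_mem_of_maximal {a b : G} (ha : a ∈ T) (hb : b ∈ T) : a * b ∈ T := by
  by_contra hab
  have hb' : b⁻¹ ∉ T := fun hb' => hT.prop (RightD.base T b hb hb')
  exact hT.prop <| of_mul_mem (a := a * b) (b := b⁻¹) (by simpa using ha)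
    (union_singleton_of_maximal hT hab) (union_singleton_of_maximal hT hb')

end Maximal

end RightD

theorem stmt10 {G : Type*} [Group G] {S : Set G} (hS : ¬ RightD S) :
    ∃ T : Set G, S ⊆ T ∧ (∀ a ∈ T, ∀ b ∈ T, a * b ∈ T) ∧ ¬ RightD T ∧
      (∀ a ∈ Tᶜ, ∀ b ∈ Tᶜ, a * b ∈ Tᶜ) := by
  obtain ⟨T, hST, hT⟩ := RightD.exists_maximal_not hS
  exact ⟨T, hST, fun _ ha _ hb => RightD.mul_mem_of_maximal hT ha hb, hT.prop,
    fun _ ha _ hb => RightD.mul_mem_compl_of_maximal hT ha hb⟩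
end

section
/- A group G is right-orderable (admits a total order compatible with right multiplication) if and only if {a} ∉ D(G) for every a ∈ G \ {e}, where D(G) is the inductive family: S ∈ D(G) if S ∩ S⁻¹ ≠ ∅, closed under T ∪ {a}, T ∪ {b} ∈ D(G) ⟹ T ∪ {a*b} ∈ D(G). -/
/-!
A right order makes every member of `D(G)` contain an element `≤ 1` (and, for the reversed
order, one `≥ 1`), so `{a} ∈ D(G)` forces `a = 1`.

Conversely, suppose no `{a}` with `a ≠ 1` lies in `D(G)`. Then every finite `F ⊆ G \ {1}` admits
signs `g ↦ g^{±1}` whose images generate a semigroup avoiding `1`: otherwise, using good signs on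
the proper subsets `F \ A` (induction on `|F|`), a downward induction on `A ⊆ F` puts every signed
copy of every nonempty `A` into `D(G)`, in particular some `{g}`.
By compactness of the space of sign choices one choice works for all finite `F` at once; the
semigroup it generates is a positive cone `P`, and `a ≤ b ↔ a = b ∨ b * a⁻¹ ∈ P` is a right order.
-/

theorem Subsemigroup.exists_finset_subset_of_mem_closure {M : Type*} [Mul M] {s : Set M} {x : M}
    (hx : x ∈ Subsemigroup.closure s) :
    ∃ t : Finset M, ↑t ⊆ s ∧ x ∈ Subsemigroup.closure (t : Set M) := by
  classical
  induction hx using Subsemigroup.closure_induction with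
  | mem x hx => exact ⟨{x}, by simpa using hx, Subsemigroup.subset_closure (by simp)⟩
  | mul x y _ _ ihx ihy =>
    obtain ⟨t, hts, hxt⟩ := ihx
    obtain ⟨u, hus, hyu⟩ := ihy
    refine ⟨t ∪ u, by simpa using Set.union_subset hts hus, mul_mem ?_ ?_⟩
    · exact Subsemigroup.closure_mono (by simp) hxt
    · exact Subsemigroup.closure_mono (by simp) hyu

theorem exists_forall_of_finitely_determined {ι α : Type*} [Finite α]
    (p : Finset ι → (ι → α) → Prop)
    (hmono : ∀ {F F' : Finset ι}, F ⊆ F' → ∀ ε, p F' ε → p F ε)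
    (hdet : ∀ (F : Finset ι) ε ε', Set.EqOn ε ε' F → p F ε → p F ε')
    (hne : ∀ F, ∃ ε, p F ε) : ∃ ε, ∀ F, p F ε := by
  classical
  let : TopologicalSpace α := ⊥
  have : DiscreteTopology α := ⟨rfl⟩
  have hclosed (F : Finset ι) : IsClosed {ε | p F ε} := by
    have : {ε | p F ε} = F.restrict ⁻¹' (F.restrict '' {ε | p F ε}) := by
      refine (Set.subset_preimage_image _ _).antisymm ?_
      rintro ε ⟨ε', hε', heq⟩
      exact hdet F ε' ε (fun i hi => congrFun heq ⟨i, hi⟩) hε'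
    rw [this]
    exact (isClosed_discrete _).preimage (Finset.continuous_restrict F)
  obtain ⟨ε, hε⟩ := IsCompact.nonempty_iInter_of_directed_nonempty_isCompact_isClosed
    (fun F : Finset ι => {ε | p F ε})
    (fun F F' => ⟨F ∪ F', hmono Finset.subset_union_left, hmono Finset.subset_union_right⟩)
    hne (fun F => (hclosed F).isCompact) hclosed
  exact ⟨ε, Set.mem_iInter.1 hε⟩

section

variable {G : Type*} [Group G]

def IsRightOrder (le : G → G → Prop) : Prop :=
  (∀ a : G, le a a) ∧
    (∀ a b : G, le a b → le b a → a = b) ∧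
    (∀ a b c : G, le a b → le b c → le a c) ∧
    (∀ a b : G, le a b ∨ le b a) ∧
    (∀ a b c : G, le a b → le (a * c) (b * c))

theorem RightD.exists_mem_rel_one (r : G → G → Prop)
    (htrans : ∀ a b c, r a b → r b c → r a c) (htot : ∀ a b, r a b ∨ r b a)
    (hcomp : ∀ a b c, r a b → r (a * c) (b * c)) {S : Set G} (hS : RightD S) :
    ∃ x ∈ S, r x 1 := by
  induction hS with
  | base S a ha hinv =>
    rcases htot a 1 with h | h
    · exact ⟨a, ha, h⟩
    · exact ⟨a⁻¹, hinv, by simpa using hcomp 1 a a⁻¹ h⟩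
  | step T a b _ _ iha ihb =>
    obtain ⟨x, hx | rfl, hx1⟩ := iha
    · exact ⟨x, .inl hx, hx1⟩
    obtain ⟨y, hy | rfl, hy1⟩ := ihb
    · exact ⟨y, .inl hy, hy1⟩
    refine ⟨x * y, .inr rfl, htrans _ y _ ?_ hy1⟩
    simpa using hcomp x 1 y hx1

theorem IsRightOrder.not_rightD_singleton {le : G → G → Prop} (hle : IsRightOrder le) {a : G}
    (ha : a ≠ 1) : ¬ RightD ({a} : Set G) := by
  obtain ⟨-, hanti, htrans, htot, hcomp⟩ := hle
  intro hD
  obtain ⟨x, rfl, hx⟩ := hD.exists_mem_rel_one le htrans htot hcomp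
  obtain ⟨y, rfl, hy⟩ := hD.exists_mem_rel_one (fun a b => le b a)
    (fun a b c h h' => htrans c b a h' h) (fun a b => htot b a) (fun a b c h => hcomp b a c h)
  exact ha (hanti _ _ hx hy)

theorem isRightOrder_of_positive_cone (P : Subsemigroup G) (h1 : (1 : G) ∉ P)
    (htot : ∀ g : G, g ≠ 1 → g ∈ P ∨ g⁻¹ ∈ P) :
    IsRightOrder fun a b : G => a = b ∨ b * a⁻¹ ∈ P := by
  refine ⟨fun a => .inl rfl, ?_, ?_, ?_, ?_⟩
  · rintro a b (hab | hab) (hba | hba)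
    · exact hab
    · exact hab
    · exact hba.symm
    · exact absurd (by simpa using mul_mem hab hba) h1
  · rintro a b c (rfl | hab) (rfl | hbc)
    · exact .inl rfl
    · exact .inr hbc
    · exact .inr hab
    · exact .inr (by simpa using mul_mem hbc hab)
  · intro a b
    by_cases hab : a = b
    · exact .inl (.inl hab)
    rcases htot (b * a⁻¹) fun h => hab (mul_inv_eq_one.1 h).symm with h | h
    · exact .inl (.inr h)
    · exact .inr (.inr (by simpa using h))
  · rintro a b c (rfl | hab)
    · exact .inl rfl
    · exact .inr (by simpa [mul_assoc] using hab)

theorem RightD.union_inv_of_mem_closure_s12 {Γ S : Set G} (hS : ∀ s ∈ S, RightD (Γ ∪ {s⁻¹}))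
    {x : G} (hx : x ∈ Submonoid.closure S) : RightD (Γ ∪ {x⁻¹}) := by
  induction hx using Submonoid.closure_induction with
  | mem s hs => exact hS s hs
  | one => exact .base _ 1 (by simp) (by simp)
  | mul x y _ _ hx hy => rw [mul_inv_rev]; exact .step Γ _ _ hy hx

theorem exists_inv_mem_closure_of_one_mem_closure_union {Γ B : Set G}
    (h : (1 : G) ∈ Subsemigroup.closure (Γ ∪ B)) (hB : (1 : G) ∉ Subsemigroup.closure B) :
    ∃ γ ∈ Γ, γ⁻¹ ∈ Submonoid.closure (Γ ∪ B) := by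
  set M := Submonoid.closure (Γ ∪ B)
  have hM {s : Set G} (hs : s ⊆ Γ ∪ B) : ∀ x ∈ Subsemigroup.closure s, x ∈ M :=
    Subsemigroup.closure_le (S := M.toSubsemigroup) |>.2 (hs.trans Submonoid.subset_closure)
  suffices key : ∀ x ∈ Subsemigroup.closure (Γ ∪ B),
      x ∈ Subsemigroup.closure B ∨ ∃ γ ∈ Γ, ∃ a ∈ M, ∃ b ∈ M, x = a * γ * b by
    obtain h | ⟨γ, hγ, a, ha, b, hb, h1⟩ := key 1 h
    · exact absurd h hB
    refine ⟨γ, hγ, ?_⟩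
    convert mul_mem hb ha using 1
    rw [inv_eq_iff_mul_eq_one]
    calc γ * (b * a) = a⁻¹ * (a * γ * b) * a := by group
      _ = 1 := by rw [← h1]; group
  intro x hx
  induction hx using Subsemigroup.closure_induction with
  | mem x hx =>
    rcases hx with hx | hx
    · exact .inr ⟨x, hx, 1, one_mem M, 1, one_mem M, by group⟩
    · exact .inl (Subsemigroup.subset_closure hx)
  | mul x y _ hy ihx ihy =>
    rcases ihx with hx | ⟨γ, hγ, a, ha, b, hb, rfl⟩
    · rcases ihy with hy | ⟨γ, hγ, a, ha, b, hb, rfl⟩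
      · exact .inl (mul_mem hx hy)
      · exact .inr ⟨γ, hγ, x * a, mul_mem (hM Set.subset_union_right x hx) ha, b, hb, by group⟩
    · exact .inr ⟨γ, hγ, a, ha, b * y, mul_mem hb (hM subset_rfl y hy), by group⟩

theorem RightD.of_one_mem_closure_union {Γ B : Set G} (hB : ∀ z ∈ B, RightD (Γ ∪ {z⁻¹}))
    (hB1 : (1 : G) ∉ Subsemigroup.closure B) (h : (1 : G) ∈ Subsemigroup.closure (Γ ∪ B)) :
    RightD Γ := by
  obtain ⟨γ, hγ, hγM⟩ := exists_inv_mem_closure_of_one_mem_closure_union h hB1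
  have hΓ : ∀ s ∈ Γ ∪ B, RightD (Γ ∪ {s⁻¹}) := by
    rintro s (hs | hs)
    · exact .base _ s (.inl hs) (.inr rfl)
    · exact hB s hs
  simpa [hγ] using RightD.union_inv_of_mem_closure_s12 hΓ hγM

def signed (ε : G → Bool) (g : G) : G := if ε g then g else g⁻¹

theorem signed_congr {ε ε' : G → Bool} {g : G} (h : ε g = ε' g) : signed ε g = signed ε' g := by
  simp only [signed, h]

theorem signed_update_not [DecidableEq G] (δ η : G → Bool) (g : G) :
    signed (Function.update δ g (!η g)) g = (signed η g)⁻¹ := by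
  cases hη : η g <;> simp [signed, hη]

theorem RightD.image_signed {F : Finset G}
    (hF : ∀ ε : G → Bool, (1 : G) ∈ Subsemigroup.closure (signed ε '' F))
    (hsub : ∀ B ⊂ F, ∃ η : G → Bool, (1 : G) ∉ Subsemigroup.closure (signed η '' B))
    {A : Finset G} (hAF : A ⊆ F) (hA : A.Nonempty) (δ : G → Bool) :
    RightD (signed δ '' A) := by
  classical
  refine Finset.strongDownwardInduction (n := F.card)
    (p := fun A => A ⊆ F → A.Nonempty → ∀ δ : G → Bool, RightD (signed δ '' A))
    (fun A ih _ hAF hA δ => ?_) A (Finset.card_le_card hAF) hAF hA δ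
  obtain ⟨η, hη⟩ := hsub (F \ A) (Finset.sdiff_ssubset hAF hA)
  have hsplit : signed (fun g => if g ∈ A then δ g else η g) '' F =
      signed δ '' A ∪ signed η '' ↑(F \ A) := by
    have hFA : (F : Set G) = (A : Set G) ∪ ↑(F \ A) := by
      rw [← Finset.coe_union, Finset.union_sdiff_of_subset hAF]
    rw [hFA, Set.image_union]
    congr 1 <;> refine Set.image_congr fun g hg => signed_congr ?_
    · simp [Finset.mem_coe.1 hg]
    · simp [(Finset.mem_sdiff.1 hg).2]
  refine RightD.of_one_mem_closure_union ?_ hη (hsplit ▸ hF _)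
  -- flipping the sign of `g` makes `(signed η g)⁻¹` a signed element of `insert g A`
  rintro _ ⟨g, hg, rfl⟩
  obtain ⟨hgF, hgA⟩ := Finset.mem_sdiff.1 hg
  have hgAF : insert g A ⊆ F := Finset.insert_subset hgF hAF
  have := ih (Finset.card_le_card hgAF) (Finset.ssubset_insert hgA) hgAF
    (Finset.insert_nonempty g A) (Function.update δ g (!η g))
  rwa [Finset.coe_insert, Set.image_insert_eq, signed_update_not, ← Set.union_singleton,
    Set.image_congr fun x hx =>
      signed_congr (Function.update_of_ne (ne_of_mem_of_not_mem hx hgA) _ _)] at this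

theorem exists_signed_one_notMem_closure (H : ∀ a : G, a ≠ 1 → ¬ RightD ({a} : Set G))
    (F : Finset G) (hF : 1 ∉ F) :
    ∃ ε : G → Bool, (1 : G) ∉ Subsemigroup.closure (signed ε '' F) := by
  induction F using Finset.strongInduction with
  | H F ih =>
  classical
  by_contra! hall
  obtain ⟨g, hg⟩ : F.Nonempty := by
    rw [Finset.nonempty_iff_ne_empty]
    rintro rfl
    exact Subsemigroup.notMem_bot (by simpa using hall fun _ => true)
  have := RightD.image_signed hall (fun B hB => ih B hB fun h1 => hF (hB.subset h1))
    (Finset.singleton_subset_iff.2 hg) (Finset.singleton_nonempty g) fun _ => true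
  exact H g (ne_of_mem_of_not_mem hg hF) (by simpa [signed] using this)

theorem exists_positive_cone (H : ∀ a : G, a ≠ 1 → ¬ RightD ({a} : Set G)) :
    ∃ P : Subsemigroup G, 1 ∉ P ∧ ∀ g : G, g ≠ 1 → g ∈ P ∨ g⁻¹ ∈ P := by
  classical
  obtain ⟨ε, hε⟩ := exists_forall_of_finitely_determined
    (fun F ε => (1 : G) ∉ Subsemigroup.closure (signed ε '' ↑(F.erase 1)))
    (fun hFF' _ h h1 => h (Subsemigroup.closure_mono
      (Set.image_mono (Finset.coe_subset.2 (Finset.erase_subset_erase _ hFF'))) h1))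
    (fun _ _ _ heq h => by
      rwa [← Set.image_congr fun g hg => signed_congr (heq (Finset.mem_of_mem_erase hg))])
    (fun F => exists_signed_one_notMem_closure H _ (Finset.notMem_erase 1 F))
  refine ⟨Subsemigroup.closure (signed ε '' {g | g ≠ 1}), fun h1 => ?_, fun g hg => ?_⟩
  · obtain ⟨t, hts, ht1⟩ := Subsemigroup.exists_finset_subset_of_mem_closure h1
    obtain ⟨F, hF, rfl⟩ := Finset.subset_set_image_iff.1 hts
    refine hε F (Subsemigroup.closure_mono ?_ ht1)
    rw [Finset.coe_image, Finset.erase_eq_of_notMem fun h => hF h rfl]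
  · have := Subsemigroup.subset_closure
      (Set.mem_image_of_mem (signed ε) (show g ∈ {g : G | g ≠ 1} from hg))
    unfold signed at this
    split_ifs at this
    · exact .inl this
    · exact .inr this

end

theorem stmt12 {G : Type*} [Group G] :
    (∃ le : G → G → Prop, (∀ a : G, le a a) ∧
      (∀ a b : G, le a b → le b a → a = b) ∧
      (∀ a b c : G, le a b → le b c → le a c) ∧
      (∀ a b : G, le a b ∨ le b a) ∧
      (∀ a b c : G, le a b → le (a * c) (b * c))) ↔
    (∀ a : G, a ≠ 1 → ¬ RightD ({a} : Set G)) := by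
  constructor
  · rintro ⟨le, hle⟩ a
    exact IsRightOrder.not_rightD_singleton hle
  · intro H
    obtain ⟨P, hP1, hPtot⟩ := exists_positive_cone H
    exact ⟨fun a b => a = b ∨ b * a⁻¹ ∈ P, isRightOrder_of_positive_cone P hP1 hPtot⟩
end

section
/- Let G be a right-orderable group. Then S ⊆ G extends to a right order of G (i.e., there is a positive cone P of a right order with S ⊆ P) if and only if S ∉ D(G), where D(G) is the inductive family: S ∈ D(G) if S ∩ S⁻¹ ≠ ∅, closed under T ∪ {a}, T ∪ {b} ∈ D(G) ⟹ T ∪ {a*b} ∈ D(G). -/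
lemma rightD_mono {G : Type*} [Group G] {U : Set G} (h : RightD U) :
    ∀ {V : Set G}, U ⊆ V → RightD V := by
  induction h with
  | base S a ha hinv =>
    intro V hUV
    exact RightD.base V a (hUV ha) (hUV hinv)
  | step T a b h1 h2 ih1 ih2 =>
    intro V hUV
    have hab : a * b ∈ V := hUV (Or.inr rfl)
    have hV : V = V ∪ {a * b} := by
      rw [Set.union_eq_self_of_subset_right (Set.singleton_subset_iff.2 hab)]
    rw [hV]
    have hT : T ⊆ V := fun x hx => hUV (Or.inl hx)
    exact RightD.step V a b
      (ih1 (Set.union_subset_union_left _ hT))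
      (ih2 (Set.union_subset_union_left _ hT))

lemma rightD_finite {G : Type*} [Group G] {U : Set G} (h : RightD U) :
    ∃ F : Set G, F ⊆ U ∧ F.Finite ∧ RightD F := by
  induction h with
  | base S a ha hinv =>
    refine ⟨{a, a⁻¹}, ?_, Set.Finite.insert a (Set.finite_singleton a⁻¹), ?_⟩
    · intro x hx; rcases hx with h | h
      · exact h ▸ ha
      · exact h ▸ hinv
    · exact RightD.base _ a (Or.inl rfl) (Or.inr rfl)
  | step T a b h1 h2 ih1 ih2 =>
    obtain ⟨F1, hF1U, hF1f, hF1D⟩ := ih1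
    obtain ⟨F2, hF2U, hF2f, hF2D⟩ := ih2
    refine ⟨((F1 ∪ F2) ∩ T) ∪ {a * b}, ?_, ?_, ?_⟩
    · exact Set.union_subset_union_left _ (Set.inter_subset_right)
    · exact (((hF1f.union hF2f).inter_of_left T).union (Set.finite_singleton _))
    · refine RightD.step _ a b (rightD_mono hF1D ?_) (rightD_mono hF2D ?_)
      · intro x hx
        rcases hF1U hx with hxT | hxa
        · exact Or.inl ⟨Or.inl hx, hxT⟩
        · exact Or.inr hxa
      · intro x hx
        rcases hF2U hx with hxT | hxb
        · exact Or.inl ⟨Or.inr hx, hxT⟩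
        · exact Or.inr hxb

theorem stmt13 {G : Type*} [Group G]
    (hro : ∃ P : Set G, (∀ a ∈ P, ∀ b ∈ P, a * b ∈ P) ∧ (1 : G) ∉ P ∧
      (∀ a : G, a ≠ 1 → a ∈ P ∨ a⁻¹ ∈ P)) (S : Set G) :
    (∃ P : Set G, (∀ a ∈ P, ∀ b ∈ P, a * b ∈ P) ∧ (1 : G) ∉ P ∧
      (∀ a : G, a ≠ 1 → a ∈ P ∨ a⁻¹ ∈ P) ∧ S ⊆ P) ↔ ¬ RightD S := by
  constructor
  · rintro ⟨P, hmul, hone, htot, hSP⟩ hD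
    -- show by induction: no RightD set is contained in a cone
    suffices h : ∀ U : Set G, RightD U → ¬ U ⊆ P from h S hD hSP
    intro U hU
    induction hU with
    | base S a ha hinv =>
      intro hSP
      exact hone (by simpa using hmul a (hSP ha) a⁻¹ (hSP hinv))
    | step T a b h1 h2 ih1 ih2 =>
      intro hsub
      have hT : T ⊆ P := fun x hx => hsub (Or.inl hx)
      have hab : a * b ∈ P := hsub (Or.inr rfl)
      by_cases h1a : a = 1
      · exact ih2 (Set.union_subset hT (Set.singleton_subset_iff.2 (by
          simpa [h1a] using hab)))
      · rcases htot a h1a with haP | haiP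
        · exact ih1 (Set.union_subset hT (Set.singleton_subset_iff.2 haP))
        · have : b ∈ P := by
            have := hmul a⁻¹ haiP (a * b) hab
            simpa using this
          exact ih2 (Set.union_subset hT (Set.singleton_subset_iff.2 this))
  · intro hS
    obtain ⟨C, hCmul, hCone, hCtot⟩ := hro
    -- Zorn's lemma on the family of supersets of S not in D
    set F : Set (Set G) := {T | S ⊆ T ∧ ¬ RightD T} with hF
    have hSF : S ∈ F := ⟨Set.Subset.rfl, hS⟩
    obtain ⟨M, hSM, hMF, hMmax⟩ : ∃ M, S ⊆ M ∧ M ∈ F ∧ ∀ T ∈ F, M ⊆ T → T ⊆ M := by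
      have hchains : ∀ c ⊆ F, IsChain (· ⊆ ·) c → c.Nonempty →
          ∃ ub ∈ F, ∀ s ∈ c, s ⊆ ub := by
        rintro c hcF hchain ⟨t0, ht0⟩
        refine ⟨⋃₀ c, ⟨(hcF ht0).1.trans (Set.subset_sUnion_of_mem ht0), ?_⟩,
          fun s hs => Set.subset_sUnion_of_mem hs⟩
        intro hD
        obtain ⟨Fin, hFinU, hFinf, hFinD⟩ := rightD_finite hD
        -- a finite subset of a directed union lies in one member
        obtain ⟨t, htc, hFt⟩ : ∃ t ∈ c, Fin ⊆ t := by
          have hdir : DirectedOn (fun i j : Set G => i ⊆ j) c := hchain.directedOn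
          have hsub : (hFinf.toFinset : Set G) ⊆ ⋃ i ∈ c, i := by
            rw [hFinf.coe_toFinset]
            simpa [Set.sUnion_eq_biUnion] using hFinU
          obtain ⟨t, htc, hFt⟩ :=
            DirectedOn.exists_mem_subset_of_finset_subset_biUnion ⟨t0, ht0⟩ hdir hsub
          exact ⟨t, htc, by rwa [hFinf.coe_toFinset] at hFt⟩
        exact (hcF htc).2 (rightD_mono hFinD hFt)
      obtain ⟨M, hSM, hMmax⟩ := zorn_subset_nonempty F hchains S hSF
      exact ⟨M, hSM, hMmax.1, fun T hT hMT => hMmax.2 hT hMT⟩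
    have hMD : ¬ RightD M := hMF.2
    -- basic properties of M
    have hMinv : ∀ a ∈ M, a⁻¹ ∉ M := fun a ha hai => hMD (RightD.base M a ha hai)
    have h1M : (1 : G) ∉ M := fun h => hMinv 1 h (by simpa using h)
    have hMii : ∀ a b : G, a * b ∈ M → a ∈ M ∨ b ∈ M := by
      intro a b hab
      by_contra h
      push_neg at h
      obtain ⟨haM, hbM⟩ := h
      have hDa : RightD (M ∪ {a}) := by
        by_contra hcon
        exact haM (hMmax (M ∪ {a}) ⟨hSM.trans Set.subset_union_left, hcon⟩
          Set.subset_union_left (Or.inr rfl))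
      have hDb : RightD (M ∪ {b}) := by
        by_contra hcon
        exact hbM (hMmax (M ∪ {b}) ⟨hSM.trans Set.subset_union_left, hcon⟩
          Set.subset_union_left (Or.inr rfl))
      have := RightD.step M a b hDa hDb
      rw [Set.union_eq_self_of_subset_right (Set.singleton_subset_iff.2 hab)] at this
      exact hMD this
    -- the set of undecided elements
    set N : Set G := {g | g ∉ M ∧ g⁻¹ ∉ M} with hN
    have hNinv : ∀ g ∈ N, g⁻¹ ∈ N := fun g hg => ⟨hg.2, by simpa using hg.1⟩
    have hNmul : ∀ g ∈ N, ∀ h ∈ N, g * h ∈ N := by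
      intro g hg h hh
      constructor
      · intro hgh
        rcases hMii g h hgh with h' | h'
        exacts [hg.1 h', hh.1 h']
      · intro hgh
        rw [mul_inv_rev] at hgh
        rcases hMii _ _ hgh with h' | h'
        exacts [hh.2 h', hg.2 h']
    have hMNM : ∀ m ∈ M, ∀ n ∈ N, m * n ∈ M := by
      intro m hm n hn
      by_contra hmn
      by_cases hmni : (m * n)⁻¹ ∈ M
      · rw [mul_inv_rev] at hmni
        rcases hMii _ _ hmni with h' | h'
        exacts [hn.2 h', hMinv m hm h']
      · have hmnN : m * n ∈ N := ⟨hmn, hmni⟩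
        have : m ∈ N := by
          have := hNmul _ hmnN _ (hNinv n hn)
          simpa using this
        exact this.1 hm
    have hNMM : ∀ n ∈ N, ∀ m ∈ M, n * m ∈ M := by
      intro n hn m hm
      by_contra hnm
      by_cases hnmi : (n * m)⁻¹ ∈ M
      · rw [mul_inv_rev] at hnmi
        rcases hMii _ _ hnmi with h' | h'
        exacts [hMinv m hm h', hn.2 h']
      · have hnmN : n * m ∈ N := ⟨hnm, hnmi⟩
        have : m ∈ N := by
          have := hNmul _ (hNinv n hn) _ hnmN
          simpa using this
        exact this.1 hm
    have hMM : ∀ a ∈ M, ∀ b ∈ M, a * b ∈ M := by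
      intro a ha b hb
      by_contra hab
      by_cases habi : (a * b)⁻¹ ∈ M
      · rw [mul_inv_rev] at habi
        rcases hMii _ _ habi with h' | h'
        exacts [hMinv b hb h', hMinv a ha h']
      · have habN : a * b ∈ N := ⟨hab, habi⟩
        have : b⁻¹ ∈ M := by
          have := hNMM _ (hNinv _ habN) a ha
          simpa [mul_assoc] using this
        exact hMinv b hb this
    -- the cone
    refine ⟨M ∪ (C ∩ N), ?_, ?_, ?_, hSM.trans Set.subset_union_left⟩
    · rintro a (ha | ⟨haC, haN⟩) b (hb | ⟨hbC, hbN⟩)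
      · exact Or.inl (hMM a ha b hb)
      · exact Or.inl (hMNM a ha b hbN)
      · exact Or.inl (hNMM a haN b hb)
      · exact Or.inr ⟨hCmul a haC b hbC, hNmul a haN b hbN⟩
    · rintro (h | ⟨hC, _⟩)
      exacts [h1M h, hCone hC]
    · intro a ha1
      by_cases haM : a ∈ M
      · exact Or.inl (Or.inl haM)
      by_cases haiM : a⁻¹ ∈ M
      · exact Or.inr (Or.inl haiM)
      have haN : a ∈ N := ⟨haM, haiM⟩
      rcases hCtot a ha1 with h | h
      · exact Or.inl (Or.inr ⟨h, haN⟩)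
      · exact Or.inr (Or.inr ⟨h, hNinv a haN⟩)
end

section
/- Let G be a group. A subset S ⊆ G extends to a right order of G if and only if for all a₁, …, aₙ ∈ G \ {e} there exist δ₁, …, δₙ ∈ {−1, 1} such that e ∉ ⟨S ∪ {a₁^{δ₁}, …, aₙ^{δₙ}}⟩, where ⟨·⟩ denotes the generated subsemigroup. -/
/-! Compactness. Sign assignments `ε : G → {±1}` form a compact space by Tychonoff. For each
finite set `s` of non-identity elements, the `ε` with `1 ∉ ⟨S ∪ {x ^ ε x | x ∈ s}⟩` form a closed
set (it only looks at `ε` on `s`), nonempty by hypothesis and shrinking as `s` grows, so some `ε`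
lies in all of them. Then `P = ⟨S ∪ {x ^ ε x | x ≠ 1}⟩` is a positive cone containing `S`, because
each element of `P` is already generated by finitely many of these generators. Conversely, a cone
`P ⊇ S` dictates the signs: `δ i = 1` if `a i ∈ P` and `-1` otherwise. -/

open Set Subsemigroup

def signChoices (G : Type*) : Set (G → ℤ) := univ.pi fun _ => {-1, 1}

theorem isCompact_signChoices (G : Type*) : IsCompact (signChoices G) :=
  isCompact_univ_pi fun _ => (toFinite _).isCompact

section

variable {G : Type*} [Group G]

def HasAvoidingSigns (S : Set G) : Prop :=
  ∀ (n : ℕ) (a : Fin n → G), (∀ i, a i ≠ 1) →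
    ∃ δ : Fin n → ℤ, (∀ i, δ i = -1 ∨ δ i = 1) ∧
      (1 : G) ∉ closure (S ∪ range fun i => a i ^ δ i)

def avoidingSigns (S s : Set G) : Set (G → ℤ) :=
  {ε ∈ signChoices G | (1 : G) ∉ closure (S ∪ (fun x => x ^ ε x) '' s)}

theorem avoidingSigns_anti (S : Set G) {s t : Set G} (hst : s ⊆ t) :
    avoidingSigns S t ⊆ avoidingSigns S s :=
  fun _ ⟨hε, h1⟩ =>
    ⟨hε, fun h => h1 (closure_mono (union_subset_union_right S (image_mono hst)) h)⟩

theorem isClosed_avoidingSigns (S : Set G) {s : Set G} (hs : s.Finite) :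
    IsClosed (avoidingSigns S s) := by
  have : Finite s := hs.to_subtype
  have hrestrict : avoidingSigns S s = signChoices G ∩ (fun ε (x : s) => ε x) ⁻¹'
      {δ | (1 : G) ∉ closure (S ∪ range fun x : s => (x : G) ^ δ x)} := by
    simp only [avoidingSigns, image_eq_range]
    rfl
  rw [hrestrict]
  exact (isClosed_set_pi fun _ _ => (toFinite _).isClosed).inter
    ((isClosed_discrete _).preimage (continuous_pi fun _ => continuous_apply _))

theorem HasAvoidingSigns.avoidingSigns_nonempty {S s : Set G} (hS : HasAvoidingSigns S)
    (hs : s.Finite) (h1 : (1 : G) ∉ s) : (avoidingSigns S s).Nonempty := by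
  obtain ⟨n, a, rfl⟩ := hs.fin_embedding
  obtain ⟨δ, hδ, hδ1⟩ := hS n a fun i h => h1 ⟨i, h⟩
  have hext : ∀ i, Function.extend a δ 1 (a i) = δ i := a.injective.extend_apply δ 1
  refine ⟨Function.extend a δ 1, fun x _ => ?_, ?_⟩
  · by_cases hx : ∃ i, a i = x
    · obtain ⟨i, rfl⟩ := hx
      simpa [hext] using hδ i
    · simp [Function.extend_apply' _ _ _ hx]
  · rw [← range_comp]
    simpa only [Function.comp_def, hext] using hδ1

theorem HasAvoidingSigns.exists_mem_iInter_avoidingSigns {S : Set G} (hS : HasAvoidingSigns S) :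
    ∃ ε, ε ∈ ⋂ A : Finset G, avoidingSigns S (↑A \ {1}) :=
  IsCompact.nonempty_iInter_of_directed_nonempty_isCompact_isClosed _
    (Antitone.directed_ge fun _ _ hAB => avoidingSigns_anti S (sdiff_subset_sdiff_left hAB))
    (fun A => hS.avoidingSigns_nonempty (A.finite_toSet.sdiff) fun h => h.2 rfl)
    (fun A => (isCompact_signChoices G).of_isClosed_subset
      (isClosed_avoidingSigns S A.finite_toSet.sdiff) (sep_subset _ _))
    (fun A => isClosed_avoidingSigns S A.finite_toSet.sdiff)

theorem one_notMem_closure_of_mem_iInter_avoidingSigns {S : Set G} {ε : G → ℤ}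
    (hε : ε ∈ ⋂ A : Finset G, avoidingSigns S (↑A \ {1})) :
    (1 : G) ∉ closure (S ∪ (fun x => x ^ ε x) '' {1}ᶜ) := by
  have hunion : S ∪ (fun x => x ^ ε x) '' {1}ᶜ =
      ⋃ A : Finset G, S ∪ (fun x => x ^ ε x) '' (↑A \ {1}) := by
    have hcover : ⋃ A : Finset G, (A : Set G) = univ :=
      eq_univ_of_forall fun x =>
        mem_iUnion.2 ⟨{x}, Finset.mem_coe.2 (Finset.mem_singleton_self x)⟩
    rw [← union_iUnion, ← image_iUnion, ← iUnion_sdiff, hcover, compl_eq_univ_sdiff]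
  rw [hunion, Subsemigroup.closure_iUnion, mem_iSup_of_directed]
  · rintro ⟨A, hA⟩
    exact (mem_iInter.1 hε A).2 hA
  · exact Monotone.directed_le fun _ _ hAB =>
      closure_mono (union_subset_union_right S (image_mono (sdiff_subset_sdiff_left hAB)))

theorem hasAvoidingSigns_of_subset_cone {S P : Set G} (hmul : ∀ a ∈ P, ∀ b ∈ P, a * b ∈ P)
    (h1 : (1 : G) ∉ P) (htot : ∀ a : G, a ≠ 1 → a ∈ P ∨ a⁻¹ ∈ P) (hSP : S ⊆ P) :
    HasAvoidingSigns S := by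
  classical
  intro n a ha
  refine ⟨fun i => if a i ∈ P then 1 else -1, fun i => by by_cases hi : a i ∈ P <;> simp [hi],
    fun h => h1 ?_⟩
  refine (closure_le (S := ⟨P, fun {a b} ha hb => hmul a ha b hb⟩)).2 ?_ h
  rintro x (hx | ⟨i, rfl⟩)
  · exact hSP hx
  · dsimp only
    split_ifs with hi
    · simpa using hi
    · simpa using (htot _ (ha i)).resolve_left hi

theorem HasAvoidingSigns.exists_cone_superset {S : Set G} (hS : HasAvoidingSigns S) :
    ∃ P : Set G, (∀ a ∈ P, ∀ b ∈ P, a * b ∈ P) ∧ (1 : G) ∉ P ∧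
      (∀ a : G, a ≠ 1 → a ∈ P ∨ a⁻¹ ∈ P) ∧ S ⊆ P := by
  obtain ⟨ε, hε⟩ := hS.exists_mem_iInter_avoidingSigns
  have hsign : ∀ x, ε x = -1 ∨ ε x = 1 := fun x => (mem_iInter.1 hε ∅).1 x trivial
  refine ⟨closure (S ∪ (fun x => x ^ ε x) '' {1}ᶜ), fun a ha b hb => mul_mem ha hb,
    one_notMem_closure_of_mem_iInter_avoidingSigns hε, fun a ha => ?_,
    subset_union_left.trans subset_closure⟩
  have hpow : a ^ ε a ∈ closure (S ∪ (fun x => x ^ ε x) '' {1}ᶜ) :=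
    subset_closure (Or.inr ⟨a, ha, rfl⟩)
  rcases hsign a with h | h <;> simp only [h, zpow_neg, zpow_one] at hpow <;> tauto

end

theorem stmt14 {G : Type*} [Group G] (S : Set G) :
    (∃ P : Set G, (∀ a ∈ P, ∀ b ∈ P, a * b ∈ P) ∧ (1 : G) ∉ P ∧
      (∀ a : G, a ≠ 1 → a ∈ P ∨ a⁻¹ ∈ P) ∧ S ⊆ P) ↔
    (∀ (n : ℕ) (a : Fin n → G), (∀ i, a i ≠ 1) →
      ∃ δ : Fin n → ℤ, (∀ i, δ i = -1 ∨ δ i = 1) ∧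
        (1 : G) ∉ Subsemigroup.closure (S ∪ Set.range fun i => a i ^ δ i)) :=
  ⟨fun ⟨_, hmul, h1, htot, hSP⟩ => hasAvoidingSigns_of_subset_cone hmul h1 htot hSP,
    HasAvoidingSigns.exists_cone_superset⟩
end

section
/- Let G be a group and define E(G) ⊆ 𝒫(G) to be the smallest family such that: (i) S ∈ E(G) whenever S ∩ S⁻¹ ≠ ∅; (ii) if T ∪ {a} ∈ E(G) and T ∪ {b} ∈ E(G), then T ∪ {a*b} ∈ E(G); (iii) if T ∪ {b*a} ∈ E(G), then T ∪ {a*b} ∈ E(G). If S ∈ E(G), then S does not extend to a bi-invariant total order of G; that is, there is no normal subsemigroup P ⊇ S with e ∉ P and P ∪ P⁻¹ = G \ {e}. -/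
/-- The inductive family `E(G)` of subsets of a group `G`: a set is in `E(G)` if it meets
its own set of inverses, and the family is closed under the rules
`T ∪ {a}, T ∪ {b} ∈ E(G) ⟹ T ∪ {a*b} ∈ E(G)` and
`T ∪ {b*a} ∈ E(G) ⟹ T ∪ {a*b} ∈ E(G)`. -/
inductive BiD {G : Type*} [Group G] : Set G → Prop
  | base (S : Set G) (a : G) (ha : a ∈ S) (hinv : a⁻¹ ∈ S) : BiD S
  | step (T : Set G) (a b : G) (h1 : BiD (T ∪ {a})) (h2 : BiD (T ∪ {b})) :
      BiD (T ∪ {a * b})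
  | swap (T : Set G) (a b : G) (h : BiD (T ∪ {b * a})) : BiD (T ∪ {a * b})

theorem BiD.not_subset {G : Type*} [Group G] {S : Set G} (hS : BiD S)
    (P : Set G) (hmul : ∀ a ∈ P, ∀ b ∈ P, a * b ∈ P)
    (hconj : ∀ a ∈ P, ∀ g : G, g * a * g⁻¹ ∈ P) (hone : (1 : G) ∉ P)
    (htot : ∀ a : G, a ≠ 1 → a ∈ P ∨ a⁻¹ ∈ P) : ¬ S ⊆ P := by
  induction hS with
  | base S a ha hinv =>
    intro hsub
    exact hone (by simpa using hmul a (hsub ha) a⁻¹ (hsub hinv))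
  | step T a b h1 h2 ih1 ih2 =>
    intro hsub
    have hT : T ⊆ P := fun x hx => hsub (Or.inl hx)
    have hab : a * b ∈ P := hsub (Or.inr rfl)
    have hna : a ∉ P := by
      intro h; exact ih1 (fun x hx => hx.elim (fun h' => hT h') (fun h' => by
        simp only [Set.mem_singleton_iff] at h'; subst h'; exact h))
    have hnb : b ∉ P := by
      intro h; exact ih2 (fun x hx => hx.elim (fun h' => hT h') (fun h' => by
        simp only [Set.mem_singleton_iff] at h'; subst h'; exact h))
    rcases eq_or_ne a 1 with rfl | ha1
    · exact hnb (by simpa using hab)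
    rcases eq_or_ne b 1 with rfl | hb1
    · exact hna (by simpa using hab)
    have hai : a⁻¹ ∈ P := (htot a ha1).resolve_left hna
    have hbi : b⁻¹ ∈ P := (htot b hb1).resolve_left hnb
    have : (a * b) * (b⁻¹ * a⁻¹) ∈ P :=
      hmul _ hab _ (hmul _ hbi _ hai)
    exact hone (by simpa [mul_assoc] using this)
  | swap T a b h ih =>
    intro hsub
    have hT : T ⊆ P := fun x hx => hsub (Or.inl hx)
    have hab : a * b ∈ P := hsub (Or.inr rfl)
    have hba : b * a ∈ P := by
      have := hconj _ hab b
      simpa [mul_assoc] using this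
    exact ih (fun x hx => hx.elim (fun h' => hT h') (fun h' => by
      simp only [Set.mem_singleton_iff] at h'; subst h'; exact hba))

theorem stmt17 {G : Type*} [Group G] {S : Set G} (hS : BiD S) :
    ¬ ∃ P : Set G, (∀ a ∈ P, ∀ b ∈ P, a * b ∈ P) ∧
      (∀ a ∈ P, ∀ g : G, g * a * g⁻¹ ∈ P) ∧ (1 : G) ∉ P ∧
      (∀ a : G, a ≠ 1 → a ∈ P ∨ a⁻¹ ∈ P) ∧ S ⊆ P := by
  rintro ⟨P, hmul, hconj, hone, htot, hsub⟩
  exact hS.not_subset P hmul hconj hone htot hsub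
end

section
/- A group G is orderable (admits a total order compatible with multiplication on both sides) if and only if {a} ∉ E(G) for all a ∈ G \ {e}, where E(G) is the smallest family of subsets of G containing all S with S ∩ S⁻¹ ≠ ∅ and closed under the rules: T ∪ {a}, T ∪ {b} ∈ E(G) ⟹ T ∪ {a*b} ∈ E(G), and T ∪ {b*a} ∈ E(G) ⟹ T ∪ {a*b} ∈ E(G). -/
section

variable {G : Type*} [Group G]

def IsBiInvariantTotalOrder (le : G → G → Prop) : Prop :=
  (∀ a : G, le a a) ∧
    (∀ a b : G, le a b → le b a → a = b) ∧
    (∀ a b c : G, le a b → le b c → le a c) ∧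
    (∀ a b : G, le a b ∨ le b a) ∧
    (∀ a b c d : G, le a b → le (c * a * d) (c * b * d))

namespace BiD

theorem mono {S : Set G} (h : BiD S) {S' : Set G} (hS : S ⊆ S') : BiD S' := by
  induction h generalizing S' with
  | base S a ha hinv => exact .base _ a (hS ha) (hS hinv)
  | step T a b _ _ ih₁ ih₂ =>
    have hT : T ∪ {a * b} ⊆ S' := hS
    rw [Set.union_subset_iff, Set.singleton_subset_iff] at hT
    simpa [Set.union_singleton, Set.insert_eq_of_mem hT.2] using
      BiD.step S' a b (ih₁ (Set.union_subset_union_left _ hT.1))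
        (ih₂ (Set.union_subset_union_left _ hT.1))
  | swap T a b _ ih =>
    have hT : T ∪ {a * b} ⊆ S' := hS
    rw [Set.union_subset_iff, Set.singleton_subset_iff] at hT
    simpa [Set.union_singleton, Set.insert_eq_of_mem hT.2] using
      BiD.swap S' a b (ih (Set.union_subset_union_left _ hT.1))

theorem exists_finite_subset {S : Set G} (h : BiD S) : ∃ F ⊆ S, F.Finite ∧ BiD F := by
  induction h with
  | base S a ha hinv =>
    refine ⟨{a, a⁻¹}, ?_, Set.toFinite _, .base _ a (by simp) (by simp)⟩
    exact Set.insert_subset ha (Set.singleton_subset_iff.2 hinv)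
  | step T a b _ _ ih₁ ih₂ =>
    obtain ⟨F₁, hF₁, hF₁fin, hF₁bid⟩ := ih₁
    obtain ⟨F₂, hF₂, hF₂fin, hF₂bid⟩ := ih₂
    refine ⟨(F₁ ∪ F₂) ∩ T ∪ {a * b},
      Set.union_subset_union_left _ Set.inter_subset_right,
      ((hF₁fin.union hF₂fin).inter_of_left T).union (Set.toFinite _),
      .step _ a b (hF₁bid.mono fun x hx => ?_) (hF₂bid.mono fun x hx => ?_)⟩
    · exact (hF₁ hx).imp (fun hxT => ⟨.inl hx, hxT⟩) id
    · exact (hF₂ hx).imp (fun hxT => ⟨.inr hx, hxT⟩) id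
  | swap T a b _ ih =>
    obtain ⟨F, hF, hFfin, hFbid⟩ := ih
    refine ⟨F ∩ T ∪ {a * b}, Set.union_subset_union_left _ Set.inter_subset_right,
      (hFfin.inter_of_left T).union (Set.toFinite _),
      .swap _ a b (hFbid.mono fun x hx => (hF hx).imp (fun hxT => ⟨hx, hxT⟩) id)⟩

theorem exists_le_one {le : G → G → Prop}
    (htrans : ∀ a b c : G, le a b → le b c → le a c)
    (htotal : ∀ a b : G, le a b ∨ le b a)
    (hmul : ∀ a b c d : G, le a b → le (c * a * d) (c * b * d))
    {S : Set G} (h : BiD S) : ∃ g ∈ S, le g 1 := by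
  induction h with
  | base S a ha hinv =>
    rcases htotal a 1 with h | h
    · exact ⟨a, ha, h⟩
    · exact ⟨a⁻¹, hinv, by simpa using hmul 1 a a⁻¹ 1 h⟩
  | step T a b _ _ ih₁ ih₂ =>
    obtain ⟨g, hg | rfl, hg₁⟩ := ih₁
    · exact ⟨g, .inl hg, hg₁⟩
    obtain ⟨g', hg' | rfl, hg'₁⟩ := ih₂
    · exact ⟨g', .inl hg', hg'₁⟩
    exact ⟨g * g', .inr rfl, htrans _ _ _ (by simpa using hmul g 1 1 g' hg₁) hg'₁⟩
  | swap T a b _ ih =>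
    obtain ⟨g, hg | hg, hg₁⟩ := ih
    · exact ⟨g, .inl hg, hg₁⟩
    refine ⟨a * b, .inr rfl, ?_⟩
    simpa [show g = b * a from hg, mul_assoc] using hmul _ 1 a a⁻¹ hg₁

theorem eq_one_of_singleton {le : G → G → Prop} (hle : IsBiInvariantTotalOrder le) {a : G}
    (h : BiD ({a} : Set G)) : a = 1 := by
  obtain ⟨-, hanti, htrans, htotal, hmul⟩ := hle
  obtain ⟨_, rfl, ha⟩ := exists_le_one htrans htotal hmul h
  obtain ⟨_, hb, ha'⟩ := exists_le_one (le := fun x y => le y x)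
    (fun x y z hxy hyz => htrans z y x hyz hxy) (fun x y => htotal y x)
    (fun x y c d h => hmul y x c d h) h
  exact hanti _ _ ha (hb ▸ ha')

theorem exists_maximal_not_superset {S : Set G} (hS : ¬ BiD S) :
    ∃ P, S ⊆ P ∧ Maximal (fun P : Set G => ¬ BiD P) P := by
  refine zorn_subset_nonempty {P | ¬ BiD P} (fun c hc hchain hne => ?_) S hS
  refine ⟨⋃₀ c, fun hbid => ?_, fun _ => Set.subset_sUnion_of_mem⟩
  obtain ⟨F, hFc, hFfin, hFbid⟩ := hbid.exists_finite_subset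
  obtain ⟨P, hPc, hFP⟩ :=
    hchain.directedOn.exists_mem_subset_of_finite_of_subset_sUnion hne hFfin hFc
  exact hc hPc (hFbid.mono hFP)

end BiD

structure IsCone (Q : Set G) : Prop where
  mul_mem {x y : G} : x ∈ Q → y ∈ Q → x * y ∈ Q
  mem_or_inv_mem (x : G) : x ∈ Q ∨ x⁻¹ ∈ Q
  conj_mem {x : G} : x ∈ Q → ∀ c : G, c * x * c⁻¹ ∈ Q

namespace IsCone

theorem compl_of_maximal_not_BiD {P : Set G} (hP : Maximal (fun P : Set G => ¬ BiD P) P) :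
    IsCone Pᶜ := by
  have hmem : ∀ x, x ∉ P ↔ BiD (P ∪ {x}) := fun x =>
    ⟨fun hx => by_contra fun h => hx ((hP.2 h Set.subset_union_left) (.inr rfl)),
      fun h hx => hP.1 (by rwa [Set.union_singleton, Set.insert_eq_of_mem hx] at h)⟩
  refine ⟨fun hx hy => ?_, fun x => ?_, fun hx c => ?_⟩
  · exact (hmem _).2 (.step P _ _ ((hmem _).1 hx) ((hmem _).1 hy))
  · by_contra! h
    exact hP.1 (.base P x (not_not.1 h.1) (not_not.1 h.2))
  · refine (hmem _).2 (.swap P _ _ ?_)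
    simpa using (hmem _).1 hx

theorem exists_notMem_of_not_BiD {a : G} (ha : ¬ BiD ({a} : Set G)) :
    ∃ Q, IsCone Q ∧ a ∉ Q := by
  obtain ⟨P, haP, hP⟩ := BiD.exists_maximal_not_superset ha
  exact ⟨Pᶜ, compl_of_maximal_not_BiD hP, fun h => h (haP rfl)⟩

variable {M Q : Set G}

theorem one_mem (hQ : IsCone Q) : (1 : G) ∈ Q := by
  simpa using hQ.mem_or_inv_mem 1

theorem sInter_of_isChain {c : Set (Set G)} (hc : ∀ Q ∈ c, IsCone Q)
    (hchain : IsChain (· ⊆ ·) c) : IsCone (⋂₀ c) where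
  mul_mem hx hy Q hQ := (hc Q hQ).mul_mem (hx Q hQ) (hy Q hQ)
  mem_or_inv_mem x := by
    by_contra! h
    simp only [Set.mem_sInter, not_forall] at h
    obtain ⟨⟨Q₁, hQ₁, hx⟩, ⟨Q₂, hQ₂, hx'⟩⟩ := h
    rcases hchain.total hQ₁ hQ₂ with h | h
    · exact ((hc Q₁ hQ₁).mem_or_inv_mem x).elim hx fun h' => hx' (h h')
    · exact ((hc Q₂ hQ₂).mem_or_inv_mem x).elim (fun h' => hx (h h')) hx'
  conj_mem hx g Q hQ := (hc Q hQ).conj_mem (hx Q hQ) g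

theorem exists_minimal : ∃ M : Set G, Minimal IsCone M := by
  refine zorn_superset {Q | IsCone Q} fun c hc hchain => ?_
  exact ⟨⋂₀ c, sInter_of_isChain hc hchain, fun _ => Set.sInter_subset_of_mem⟩

theorem lex (hM : IsCone M) (hQ : IsCone Q) : IsCone {x | x ∈ M ∧ (x⁻¹ ∈ M → x ∈ Q)} where
  mul_mem {x y} hx hy := by
    refine ⟨hM.mul_mem hx.1 hy.1, fun hxy => hQ.mul_mem (hx.2 ?_) (hy.2 ?_)⟩
    · simpa using hM.mul_mem hy.1 hxy
    · simpa [mul_assoc] using hM.mul_mem hxy hx.1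
  mem_or_inv_mem x := by
    by_cases hx : x ∈ M
    · by_cases hx' : x⁻¹ ∈ M
      · exact (hQ.mem_or_inv_mem x).imp (fun h => ⟨hx, fun _ => h⟩)
          (fun h => ⟨hx', fun _ => h⟩)
      · exact .inl ⟨hx, fun h => absurd h hx'⟩
    · exact .inr ⟨(hM.mem_or_inv_mem x).resolve_left hx, fun h => absurd (inv_inv x ▸ h) hx⟩
  conj_mem {x} hx c := by
    refine ⟨hM.conj_mem hx.1 c, fun h => hQ.conj_mem (hx.2 ?_) c⟩
    simpa [mul_assoc] using hM.conj_mem h c⁻¹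

theorem eq_one_of_minimal (hM : Minimal IsCone M)
    (H : ∀ a : G, a ≠ 1 → ∃ Q, IsCone Q ∧ a ∉ Q) : ∀ k ∈ M, k⁻¹ ∈ M → k = 1 := by
  intro k hk hk'
  by_contra hk1
  obtain ⟨Q, hQ, hkQ⟩ := H k hk1
  have hle := hM.2 (hM.1.lex hQ) fun _ hx => hx.1
  exact hkQ ((hle hk).2 hk')

theorem isBiInvariantTotalOrder (hM : IsCone M) (hker : ∀ k ∈ M, k⁻¹ ∈ M → k = 1) :
    IsBiInvariantTotalOrder fun x y : G => y * x⁻¹ ∈ M := by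
  refine ⟨fun x => by simpa using hM.one_mem, fun x y hxy hyx => ?_, fun x y z hxy hyz => ?_,
    fun x y => ?_, fun x y c d hxy => ?_⟩
  · exact (mul_inv_eq_one.1 (hker _ hxy (by simpa using hyx))).symm
  · simpa using hM.mul_mem hyz hxy
  · simpa using hM.mem_or_inv_mem (y * x⁻¹)
  · simpa [mul_assoc] using hM.conj_mem hxy c

end IsCone

end

theorem stmt18 {G : Type*} [Group G] :
    (∃ le : G → G → Prop, (∀ a : G, le a a) ∧
      (∀ a b : G, le a b → le b a → a = b) ∧
      (∀ a b c : G, le a b → le b c → le a c) ∧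
      (∀ a b : G, le a b ∨ le b a) ∧
      (∀ a b c d : G, le a b → le (c * a * d) (c * b * d))) ↔
    (∀ a : G, a ≠ 1 → ¬ BiD ({a} : Set G)) := by
  refine ⟨fun ⟨le, hle⟩ a ha h => ha (BiD.eq_one_of_singleton hle h), fun H => ?_⟩
  obtain ⟨M, hM⟩ := IsCone.exists_minimal (G := G)
  have hker := IsCone.eq_one_of_minimal hM fun a ha => IsCone.exists_notMem_of_not_BiD (H a ha)
  exact ⟨fun x y => y * x⁻¹ ∈ M, hM.1.isBiInvariantTotalOrder hker⟩
end

section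
/- In the Klein bottle group K = ⟨x, y | x*y*x⁻¹*y = e⟩, the singleton {y̅} (the image of y in K) belongs to E(K), the smallest family of subsets of K containing all S with S ∩ S⁻¹ ≠ ∅ and closed under the rules: T ∪ {a}, T ∪ {b} ∈ E(K) ⟹ T ∪ {a*b} ∈ E(K), and T ∪ {b*a} ∈ E(K) ⟹ T ∪ {a*b} ∈ E(K). Consequently, K is not bi-orderable. -/
/-- The single relator `x * y * x⁻¹ * y` of the Klein bottle group, with
`x = FreeGroup.of true` and `y = FreeGroup.of false`. -/
def kleinRels : Set (FreeGroup Bool) :=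
  {FreeGroup.of true * FreeGroup.of false * (FreeGroup.of true)⁻¹ * FreeGroup.of false}

/-- The Klein bottle group `⟨x, y ∣ x*y*x⁻¹*y⟩`. -/
abbrev KleinBottleGroup := PresentedGroup kleinRels

/-!
A two-sided invariant total preorder `≤` on a group has an element `≤ 1` in every set of `E(G)`:
this holds for a set meeting its inverses, and is preserved by both closure rules. Applied to `≤`
and to its reverse, `{a} ∈ E(G)` forces `a ≤ 1 ≤ a`, so `a = 1` in a bi-ordered group.

In the Klein bottle group `x y x⁻¹ = y⁻¹`, so `y⁻¹ y⁻¹` is a conjugate of `y y`. Starting from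
`{y, y⁻¹}` the rules produce `{y, y⁻¹ y⁻¹}`, then `{y, y y}`, and finally `{y, y⁻¹ (y y)} = {y}`.
But `y ≠ 1`, since `x ↦ 1`, `y ↦ -1` defines a homomorphism onto `ℤˣ`.
-/

namespace BiD

variable {G : Type*} [Group G]

theorem of_conj {T : Set G} {g a : G} (h : BiD (T ∪ {g * a * g⁻¹})) : BiD (T ∪ {a}) := by
  simpa using swap T g⁻¹ (g * a) (by simpa [mul_assoc] using h)

section Preorder

variable (r : G → G → Prop) (htrans : ∀ a b c, r a b → r b c → r a c)
  (htot : ∀ a b, r a b ∨ r b a) (hcompat : ∀ a b c d, r a b → r (c * a * d) (c * b * d))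
include htrans htot hcompat

theorem exists_le_one_s19 {S : Set G} (hS : BiD S) : ∃ s ∈ S, r s 1 := by
  induction hS with
  | base S a ha hinv =>
    rcases htot a 1 with h | h
    · exact ⟨a, ha, h⟩
    · exact ⟨a⁻¹, hinv, by simpa using hcompat 1 a a⁻¹ 1 h⟩
  | step T a b _ _ iha ihb =>
    obtain ⟨s, hs | rfl, has⟩ := iha
    · exact ⟨s, .inl hs, has⟩
    obtain ⟨t, ht | rfl, hbt⟩ := ihb
    · exact ⟨t, .inl ht, hbt⟩
    have hst : r (s * t) t := by simpa using hcompat s 1 1 t has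
    exact ⟨s * t, .inr rfl, htrans _ _ _ hst hbt⟩
  | swap T a b _ ih =>
    obtain ⟨s, hs | rfl, hs1⟩ := ih
    · exact ⟨s, .inl hs, hs1⟩
    · exact ⟨a * b, .inr rfl, by simpa [mul_assoc] using hcompat (b * a) 1 a a⁻¹ hs1⟩

theorem eq_one_of_singleton_s19 (hanti : ∀ a b, r a b → r b a → a = b) {a : G} (ha : BiD {a}) :
    a = 1 := by
  obtain ⟨_, rfl, hle⟩ := ha.exists_le_one_s19 r htrans htot hcompat
  obtain ⟨_, rfl, hge⟩ := ha.exists_le_one_s19 (fun a b => r b a)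
    (fun a b c hab hbc => htrans c b a hbc hab) (fun a b => htot b a)
    (fun a b c d hab => hcompat b a c d hab)
  exact hanti _ _ hle hge

end Preorder

theorem singleton_of_conj_eq_inv {x y : G} (h : x * y * x⁻¹ = y⁻¹) : BiD {y} := by
  have hy : BiD ({y} ∪ {y⁻¹}) := base _ y (.inl rfl) (.inr rfl)
  have hsq_inv : BiD ({y} ∪ {y⁻¹ * y⁻¹}) := step _ _ _ hy hy
  have hconj : x * (y * y) * x⁻¹ = y⁻¹ * y⁻¹ := by
    rw [← h]; group
  have hsq : BiD ({y} ∪ {y * y}) := of_conj (hconj ▸ hsq_inv)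
  simpa using step _ _ _ hy hsq

end BiD

namespace KleinBottleGroup

theorem of_true_mul_of_false_mul_inv :
    (PresentedGroup.of true * PresentedGroup.of false * (PresentedGroup.of true)⁻¹ :
      KleinBottleGroup) = (PresentedGroup.of false)⁻¹ := by
  refine eq_inv_of_mul_eq_one_left ?_
  exact (QuotientGroup.eq_one_iff _).2 (Subgroup.subset_normalClosure rfl)

theorem of_false_ne_one : (PresentedGroup.of false : KleinBottleGroup) ≠ 1 := by
  let sign : Bool → ℤˣ := fun b => if b then 1 else -1
  have hsign : ∀ r ∈ kleinRels, FreeGroup.lift sign r = 1 := by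
    rintro _ rfl
    simp [sign]
  intro h
  simpa [sign] using congrArg (PresentedGroup.toGroup hsign) h

end KleinBottleGroup

theorem stmt19 :
    BiD ({PresentedGroup.of false} : Set KleinBottleGroup) ∧
    ¬ ∃ le : KleinBottleGroup → KleinBottleGroup → Prop,
      (∀ a, le a a) ∧ (∀ a b, le a b → le b a → a = b) ∧
      (∀ a b c, le a b → le b c → le a c) ∧
      (∀ a b, le a b ∨ le b a) ∧
      (∀ a b c d, le a b → le (c * a * d) (c * b * d)) := by
  have hy := BiD.singleton_of_conj_eq_inv KleinBottleGroup.of_true_mul_of_false_mul_inv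
  refine ⟨hy, ?_⟩
  rintro ⟨le, -, hanti, htrans, htot, hcompat⟩
  exact KleinBottleGroup.of_false_ne_one (hy.eq_one_of_singleton_s19 le htrans htot hcompat hanti)
end
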